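/- The energy tensor of a regular 2-form depends only on its canonical 2-form and energetic index: if U is a unitary 2-form on ℝ⁴, φ, ψ ∈ ℝ, and F := e^φ·(cos ψ · U + sin ψ · (*U)), then the energy tensor T := −(1/2)(F̂∘F̂ + (*F)̂∘(*F)̂) equals −(1/2)·e^{2φ}·(Û∘Û + (*U)̂∘(*U)̂); in particular T does not depend on ψ. Moreover T satisfies the energy condition: η(Tx, x) > 0 for every timelike vector x. -/

import Mathlib

open Matrix Real

/-- Spacetime `ℝ⁴` with the standard basis. -/
abbrev V4 : Type := Fin 4 → ℝ

/-- `4×4` real matrices: components of bilinear forms / endomorphisms of `ℝ⁴`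
in the standard basis `(e₀,e₁,e₂,e₃)`. -/
abbrev Mat4 : Type := Matrix (Fin 4) (Fin 4) ℝ

/-- The Minkowski metric `diag(-1,1,1,1)` (it equals its own inverse). -/
noncomputable def ηm : Mat4 := Matrix.diagonal ![-1, 1, 1, 1]

/-- The Minkowski bilinear form `η(x,y) = -x₀y₀ + x₁y₁ + x₂y₂ + x₃y₃`. -/
noncomputable def ηb (x y : V4) : ℝ := x ⬝ᵥ ηm *ᵥ y

/-- A vector `x` is timelike if `η(x,x) < 0`. -/
noncomputable def Timelike (x : V4) : Prop := ηb x x < 0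

/-- Evaluation of the bilinear form with component matrix `B`:
`B(x,y) = Σ xᵅ B_{αβ} yᵝ`. -/
noncomputable def bil (B : Mat4) (x y : V4) : ℝ := x ⬝ᵥ B *ᵥ y

/-- A 2-form is a skew-symmetric bilinear form. -/
noncomputable def IsTwoForm (B : Mat4) : Prop := Bᵀ = -B

/-- The endomorphism `B̂` associated with the bilinear form `B`, i.e. the unique
endomorphism with `η(B̂x, y) = B(x,y)` for all `x, y`.  (Indeed
`ηb (hat B *ᵥ x) y = bil B x y`.) -/
noncomputable def hat (B : Mat4) : Mat4 := ηm * Bᵀ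

/-- The totally antisymmetric Levi-Civita symbol on four indices, `ε₀₁₂₃ = 1`. -/
noncomputable def lc (a b c d : Fin 4) : ℝ :=
  (((b : ℕ) : ℝ) - ((a : ℕ) : ℝ)) * (((c : ℕ) : ℝ) - ((a : ℕ) : ℝ)) *
    (((d : ℕ) : ℝ) - ((a : ℕ) : ℝ)) * (((c : ℕ) : ℝ) - ((b : ℕ) : ℝ)) *
    (((d : ℕ) : ℝ) - ((b : ℕ) : ℝ)) * (((d : ℕ) : ℝ) - ((c : ℕ) : ℝ)) / 12

/-- The Hodge dual of a 2-form:
`(*F)(e_α,e_β) = (1/2) Σ ε_{αβγδ} η^{γμ} η^{δν} F(e_μ,e_ν)`. -/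
noncomputable def hodge (F : Mat4) : Mat4 :=
  Matrix.of fun α β => (1/2) * ∑ γ, ∑ δ, ∑ μ, ∑ ν, lc α β γ δ * ηm γ μ * ηm δ ν * F μ ν

/-- A unitary 2-form: `tr(Û∘Û) = 2` and `tr(Û∘(*U)̂) = 0`. -/
noncomputable def IsUnitary (U : Mat4) : Prop :=
  IsTwoForm U ∧ (hat U * hat U).trace = 2 ∧ (hat U * hat (hodge U)).trace = 0

/-- An endomorphism `L` is η-self-adjoint if `η(Lx,y) = η(x,Ly)` for all `x, y`. -/
noncomputable def SelfAdj (L : Mat4) : Prop := ∀ x y : V4, ηb (L *ᵥ x) y = ηb x (L *ᵥ y)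

/-!
Hodge duality acts on the span of `U` and `*U` as a rotation by a right angle (`**U = -U`), so
`F, *F` arise from `U, *U` by the rotation by `ψ` scaled by `e^φ`, and the quadratic expression
`F̂² + (*F)̂²` is invariant under such rotations.

Since `Û` and `(*U)̂` are η-skew, `η(Tx, x) = ½ e^{2φ} (η(Ûx, Ûx) + η((*U)̂x, (*U)̂x))`. Both
vectors are η-orthogonal to the timelike `x`, hence spacelike or zero, and they cannot both vanish
because `Û² - (*U)̂² = ½ tr(Û²) · 1 = 1`.
-/

lemma ηm_eq : ηm = !![-1, 0, 0, 0; 0, 1, 0, 0; 0, 0, 1, 0; 0, 0, 0, 1] := by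
  ext i j
  fin_cases i <;> fin_cases j <;> simp [ηm]

lemma ηm_transpose : ηmᵀ = ηm := by
  simp [ηm]

lemma ηm_mul_self : ηm * ηm = 1 := by
  rw [ηm, diagonal_mul_diagonal, ← diagonal_one]
  congr 1
  ext i
  fin_cases i <;> simp

lemma ηb_eq (u v : V4) : ηb u v = -(u 0 * v 0) + u 1 * v 1 + u 2 * v 2 + u 3 * v 3 := by
  simp [ηb, ηm_eq, mulVec, dotProduct, Fin.sum_univ_four]

lemma ηb_smul_left (k : ℝ) (u v : V4) : ηb (k • u) v = k * ηb u v := by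
  simp [ηb]

lemma ηb_add_left (u v w : V4) : ηb (u + v) w = ηb u w + ηb v w := by
  simp [ηb, add_dotProduct]

lemma ηb_hat_mulVec (B : Mat4) (x y : V4) : ηb (hat B *ᵥ x) y = bil B x y := by
  rw [ηb, bil, hat, dotProduct_mulVec, ← vecMul_transpose, transpose_mul, transpose_transpose,
    ηm_transpose, vecMul_vecMul, Matrix.mul_assoc, ηm_mul_self, Matrix.mul_one,
    ← dotProduct_mulVec]

lemma Timelike.ne_zero {x : V4} (hx : Timelike x) : x ≠ 0 := by
  rintro rfl
  simp [Timelike, ηb] at hx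

lemma ηb_self_pos_of_orthogonal {x v : V4} (hx : Timelike x) (hvx : ηb v x = 0) (hv : v ≠ 0) :
    0 < ηb v v := by
  rw [Timelike, ηb_eq] at hx
  rw [ηb_eq] at hvx ⊢
  by_contra! hle
  -- Cauchy–Schwarz on the spatial parts forces `v₀ = 0`, and then `v = 0`.
  have hcs : (v 1 * x 1 + v 2 * x 2 + v 3 * x 3) ^ 2 ≤
      (v 1 ^ 2 + v 2 ^ 2 + v 3 ^ 2) * (x 1 ^ 2 + x 2 ^ 2 + x 3 ^ 2) := by
    nlinarith [sq_nonneg (v 1 * x 2 - v 2 * x 1), sq_nonneg (v 1 * x 3 - v 3 * x 1),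
      sq_nonneg (v 2 * x 3 - v 3 * x 2)]
  have hv0 : v 0 = 0 := by
    have hvx' : v 0 * x 0 = v 1 * x 1 + v 2 * x 2 + v 3 * x 3 := by linarith
    have hx' : 0 < x 0 ^ 2 - (x 1 ^ 2 + x 2 ^ 2 + x 3 ^ 2) := by linarith
    have : (v 0 * x 0) ^ 2 ≤ v 0 ^ 2 * (x 1 ^ 2 + x 2 ^ 2 + x 3 ^ 2) :=
      calc (v 0 * x 0) ^ 2 = (v 1 * x 1 + v 2 * x 2 + v 3 * x 3) ^ 2 := by rw [hvx']
        _ ≤ (v 1 ^ 2 + v 2 ^ 2 + v 3 ^ 2) * (x 1 ^ 2 + x 2 ^ 2 + x 3 ^ 2) := hcs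
        _ ≤ v 0 ^ 2 * (x 1 ^ 2 + x 2 ^ 2 + x 3 ^ 2) := by gcongr; linarith
    exact pow_eq_zero_iff two_ne_zero |>.mp (by nlinarith [sq_nonneg (v 0)])
  apply hv
  ext i
  fin_cases i <;> simp <;> nlinarith [sq_nonneg (v 1), sq_nonneg (v 2), sq_nonneg (v 3)]

lemma ηb_self_nonneg_of_orthogonal {x v : V4} (hx : Timelike x) (hvx : ηb v x = 0) :
    0 ≤ ηb v v := by
  rcases eq_or_ne v 0 with rfl | hv
  · simp [ηb]
  · exact (ηb_self_pos_of_orthogonal hx hvx hv).le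

lemma hat_add (M N : Mat4) : hat (M + N) = hat M + hat N := by
  rw [hat, transpose_add, Matrix.mul_add, hat, hat]

lemma hat_sub (M N : Mat4) : hat (M - N) = hat M - hat N := by
  rw [hat, transpose_sub, Matrix.mul_sub, hat, hat]

lemma hat_smul (t : ℝ) (M : Mat4) : hat (t • M) = t • hat M := by
  rw [hat, transpose_smul, Matrix.mul_smul, hat]

lemma hodge_apply (F : Mat4) (α β : Fin 4) :
    hodge F α β = (1/2) * ∑ γ, ∑ δ, lc α β γ δ * ηm γ γ * ηm δ δ * F γ δ := by
  simp only [hodge, of_apply, ηm, diagonal_apply, mul_ite, mul_zero, ite_mul, zero_mul,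
    Finset.sum_ite_eq, Finset.mem_univ, if_true]

lemma hodge_add (M N : Mat4) : hodge (M + N) = hodge M + hodge N := by
  ext α β
  simp only [hodge_apply, Matrix.add_apply, mul_add, Finset.sum_add_distrib]

lemma hodge_smul (t : ℝ) (M : Mat4) : hodge (t • M) = t • hodge M := by
  ext α β
  simp only [hodge_apply, Matrix.smul_apply, smul_eq_mul, Finset.mul_sum]
  exact Finset.sum_congr rfl fun _ _ => Finset.sum_congr rfl fun _ _ => by ring

section TwoForm

variable {B : Mat4}

lemma IsTwoForm.bil_comm (hB : IsTwoForm B) (x y : V4) : bil B x y = -bil B y x := by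
  rw [bil, bil, dotProduct_mulVec, ← mulVec_transpose, hB, dotProduct_comm, neg_mulVec,
    dotProduct_neg]

lemma IsTwoForm.ηb_hat_mulVec_self (hB : IsTwoForm B) (x : V4) : ηb (hat B *ᵥ x) x = 0 := by
  have := hB.bil_comm x x
  rw [ηb_hat_mulVec]
  linarith

lemma IsTwoForm.ηb_hat_mul_hat_mulVec (hB : IsTwoForm B) (x : V4) :
    ηb ((hat B * hat B) *ᵥ x) x = -ηb (hat B *ᵥ x) (hat B *ᵥ x) := by
  rw [← mulVec_mulVec, ηb_hat_mulVec, ηb_hat_mulVec, hB.bil_comm]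

end TwoForm

def skewMat (a b c p q r : ℝ) : Mat4 := !![0, a, b, c; -a, 0, p, q; -b, -p, 0, r; -c, -q, -r, 0]

lemma IsTwoForm.eq_skewMat {U : Mat4} (hU : IsTwoForm U) :
    U = skewMat (U 0 1) (U 0 2) (U 0 3) (U 1 2) (U 1 3) (U 2 3) := by
  have h : ∀ i j, U j i = -U i j := fun i j => congrFun (congrFun hU i) j
  have hdiag : ∀ i, U i i = 0 := fun i => by linarith [h i i]
  ext i j
  fin_cases i <;> fin_cases j <;>
    simp [skewMat, hdiag, h 0 1, h 0 2, h 0 3, h 1 2, h 1 3, h 2 3]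

lemma isTwoForm_skewMat (a b c p q r : ℝ) : IsTwoForm (skewMat a b c p q r) := by
  ext i j
  fin_cases i <;> fin_cases j <;> simp [skewMat]

lemma hodge_skewMat (a b c p q r : ℝ) :
    hodge (skewMat a b c p q r) = skewMat r (-q) p (-c) b (-a) := by
  ext i j
  fin_cases i <;> fin_cases j <;>
    simp [hodge_apply, lc, ηm, skewMat, Fin.sum_univ_four] <;> ring

lemma hat_skewMat (a b c p q r : ℝ) :
    hat (skewMat a b c p q r) = !![0, a, b, c; a, 0, -p, -q; b, p, 0, -r; c, q, r, 0] := by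
  ext i j
  fin_cases i <;> fin_cases j <;> simp [hat, ηm_eq, skewMat, mul_apply, Fin.sum_univ_four]

lemma trace_hat_skewMat_sq (a b c p q r : ℝ) :
    (hat (skewMat a b c p q r) * hat (skewMat a b c p q r)).trace =
      2 * (a ^ 2 + b ^ 2 + c ^ 2 - p ^ 2 - q ^ 2 - r ^ 2) := by
  simp [hat_skewMat, trace, Fin.sum_univ_four]
  ring

lemma hat_skewMat_sq_sub_hat_hodge_sq (a b c p q r : ℝ) :
    hat (skewMat a b c p q r) * hat (skewMat a b c p q r) -
        hat (hodge (skewMat a b c p q r)) * hat (hodge (skewMat a b c p q r)) =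
      (a ^ 2 + b ^ 2 + c ^ 2 - p ^ 2 - q ^ 2 - r ^ 2) • 1 := by
  rw [hodge_skewMat]
  ext i j
  fin_cases i <;> fin_cases j <;>
    simp [hat_skewMat, one_apply] <;> ring

section HodgeDual

variable {U : Mat4}

lemma isTwoForm_hodge (hU : IsTwoForm U) : IsTwoForm (hodge U) := by
  rw [hU.eq_skewMat, hodge_skewMat]
  exact isTwoForm_skewMat _ _ _ _ _ _

lemma IsTwoForm.hodge_hodge (hU : IsTwoForm U) : hodge (hodge U) = -U := by
  rw [hU.eq_skewMat, hodge_skewMat, hodge_skewMat]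
  ext i j
  fin_cases i <;> fin_cases j <;> simp [skewMat]

lemma IsTwoForm.hat_sq_sub_hat_hodge_sq (hU : IsTwoForm U) :
    hat U * hat U - hat (hodge U) * hat (hodge U) =
      ((hat U * hat U).trace / 2) • 1 := by
  rw [hU.eq_skewMat, hat_skewMat_sq_sub_hat_hodge_sq, trace_hat_skewMat_sq]
  ring_nf

lemma IsTwoForm.hodge_duality_rotation (hU : IsTwoForm U) (c s : ℝ) :
    hodge (c • U + s • hodge U) = c • hodge U - s • U := by
  rw [hodge_add, hodge_smul, hodge_smul, hU.hodge_hodge, smul_neg, sub_eq_add_neg]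

end HodgeDual

section EnergyTensor

noncomputable def energyTensor (F : Mat4) : Mat4 :=
  (-(1/2) : ℝ) • (hat F * hat F + hat (hodge F) * hat (hodge F))

lemma rotation_mul_self_add_mul_self {R : Type*} [Ring R] [Algebra ℝ R] (c s : ℝ) (A B : R) :
    (c • A + s • B) * (c • A + s • B) + (c • B - s • A) * (c • B - s • A) =
      (c ^ 2 + s ^ 2) • (A * A + B * B) := by
  simp only [add_mul, mul_add, sub_mul, mul_sub, smul_mul_smul_comm]
  module

lemma energyTensor_smul (t : ℝ) (F : Mat4) :
    energyTensor (t • F) = t ^ 2 • energyTensor F := by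
  simp only [energyTensor, hodge_smul, hat_smul, smul_mul_smul_comm, ← smul_add, smul_smul]
  ring_nf

variable {U : Mat4}

lemma IsTwoForm.energyTensor_duality_rotation (hU : IsTwoForm U) (ψ : ℝ) :
    energyTensor (cos ψ • U + sin ψ • hodge U) = energyTensor U := by
  rw [energyTensor, energyTensor, hU.hodge_duality_rotation, hat_add, hat_sub, hat_smul,
    hat_smul, hat_smul, hat_smul, rotation_mul_self_add_mul_self, cos_sq_add_sin_sq, one_smul]

lemma IsTwoForm.energyTensor_pos (hU : IsTwoForm U) (htr : (hat U * hat U).trace ≠ 0)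
    {x : V4} (hx : Timelike x) : 0 < ηb (energyTensor U *ᵥ x) x := by
  have hV := isTwoForm_hodge hU
  have hval : ηb (energyTensor U *ᵥ x) x =
      (ηb (hat U *ᵥ x) (hat U *ᵥ x) + ηb (hat (hodge U) *ᵥ x) (hat (hodge U) *ᵥ x)) / 2 := by
    rw [energyTensor, smul_mulVec, ηb_smul_left, add_mulVec, ηb_add_left,
      hU.ηb_hat_mul_hat_mulVec, hV.ηb_hat_mul_hat_mulVec]
    ring
  have hne : hat U *ᵥ x ≠ 0 ∨ hat (hodge U) *ᵥ x ≠ 0 := by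
    by_contra! h
    have := congrArg (· *ᵥ x) hU.hat_sq_sub_hat_hodge_sq
    simp only [sub_mulVec, ← mulVec_mulVec, h.1, h.2, mulVec_zero, sub_zero, smul_mulVec,
      one_mulVec] at this
    exact hx.ne_zero (smul_eq_zero.mp this.symm |>.resolve_left (div_ne_zero htr two_ne_zero))
  have hUx := ηb_self_nonneg_of_orthogonal hx (hU.ηb_hat_mulVec_self x)
  have hVx := ηb_self_nonneg_of_orthogonal hx (hV.ηb_hat_mulVec_self x)
  rw [hval]
  rcases hne with hne | hne
  · linarith [ηb_self_pos_of_orthogonal hx (hU.ηb_hat_mulVec_self x) hne]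
  · linarith [ηb_self_pos_of_orthogonal hx (hV.ηb_hat_mulVec_self x) hne]

end EnergyTensor

/-- The energy tensor of a regular 2-form depends only on its canonical 2-form
and energetic index: `T = -(1/2)e^{2φ}(Û∘Û + (*U)̂∘(*U)̂)` (no dependence on ψ),
and it satisfies the energy condition `η(Tx,x) > 0` for timelike `x`. -/
theorem stmt6 (U : Mat4) (hU : IsUnitary U) (φ ψ : ℝ) (F T : Mat4)
    (hF : F = Real.exp φ • (Real.cos ψ • U + Real.sin ψ • hodge U))
    (hT : T = (-(1/2) : ℝ) • (hat F * hat F + hat (hodge F) * hat (hodge F))) :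
    T = (-(1/2) * Real.exp (2*φ)) •
        (hat U * hat U + hat (hodge U) * hat (hodge U)) ∧
    ∀ x : V4, Timelike x → 0 < ηb (T *ᵥ x) x := by
  obtain ⟨hU, htr, -⟩ := hU
  have hT' : T = Real.exp (2 * φ) • energyTensor U := by
    rw [hT, ← energyTensor, hF, energyTensor_smul, hU.energyTensor_duality_rotation,
      ← exp_nat_mul]
    norm_num
  refine ⟨by rw [hT', energyTensor, smul_smul, mul_comm], fun x hx => ?_⟩
  rw [hT', smul_mulVec, ηb_smul_left]
  exact mul_pos (exp_pos _) (hU.energyTensor_pos (by rw [htr]; norm_num) hx)
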